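/- For every natural number i > 0, ∫_0^{2/(3^i-1)} f(t) dt = (2^(i-1) / 9^i) · ((5·3^i - 1) / (2·3^i - 2)) · (1 / (1 - (2/9)^i)). -/

import Mathlib

/-!
Write `F x = ∫₀ˣ f`. Integrating the three functional equations gives `F (x/3) = (2/9) F x` and
`F ((2+x)/3) = 5/18 + x/9 + (2/9) F x` on `[0,1]`; the constant `5/18 = F (2/3)` comes from
splitting `[0,1]` into thirds, which forces `F 1 = 1/2`. The point `c = 2/(3^i - 1)` satisfies
`c = ((2+c)/3) / 3^(i-1)`, so composing the two rules yields a linear equation for `F c`.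
-/

open intervalIntegral Set

variable {f : ℝ → ℝ}

lemma intervalIntegrable_of_mem_Icc_zero_one (hcont : ContinuousOn f (Icc 0 1)) {a b : ℝ}
    (ha : a ∈ Icc (0:ℝ) 1) (hb : b ∈ Icc (0:ℝ) 1) :
    IntervalIntegrable f MeasureTheory.volume a b :=
  (hcont.mono (uIcc_subset_Icc ha hb)).intervalIntegrable

lemma integral_zero_div_three (hw1 : ∀ x ∈ Icc (0:ℝ) 1, f (x / 3) = (2/3) * f x)
    {b : ℝ} (hb : b ∈ Icc (0:ℝ) 1) :
    ∫ t in (0:ℝ)..b / 3, f t = 2/9 * ∫ t in (0:ℝ)..b, f t := by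
  have h := integral_comp_div f (a := 0) (b := b) (three_ne_zero (α := ℝ))
  rw [integral_congr fun x hx => hw1 x (uIcc_subset_Icc unitInterval.zero_mem hb hx),
    integral_const_mul, zero_div, smul_eq_mul] at h
  linarith

lemma integral_zero_div_three_pow (hw1 : ∀ x ∈ Icc (0:ℝ) 1, f (x / 3) = (2/3) * f x)
    (n : ℕ) {b : ℝ} (hb : b ∈ Icc (0:ℝ) 1) :
    ∫ t in (0:ℝ)..b / 3 ^ n, f t = (2/9) ^ n * ∫ t in (0:ℝ)..b, f t := by
  induction n generalizing b with
  | zero => simp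
  | succ n ih =>
    have hb3 : b / 3 ∈ Icc (0:ℝ) 1 := ⟨by linarith [hb.1], by linarith [hb.2]⟩
    rw [pow_succ', ← div_div, ih hb3, integral_zero_div_three hw1 hb, pow_succ]
    ring

lemma integral_one_third_two_thirds (hcont : ContinuousOn f (Icc 0 1))
    (hw2 : ∀ x ∈ Icc (0:ℝ) 1, f ((2 - x) / 3) = (1/3) * (1 + f x)) :
    ∫ t in (1/3:ℝ)..2/3, f t = 1/9 * (1 + ∫ t in (0:ℝ)..1, f t) := by
  have h := integral_comp_sub_div f (a := 0) (b := 1) (three_ne_zero (α := ℝ)) (2/3)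
  have hI := intervalIntegrable_of_mem_Icc_zero_one hcont unitInterval.zero_mem
    unitInterval.one_mem
  rw [integral_congr fun x hx => (congrArg f (by ring)).trans
      (hw2 x (uIcc_subset_Icc unitInterval.zero_mem unitInterval.one_mem hx)),
    integral_const_mul, integral_add intervalIntegrable_const hI, smul_eq_mul] at h
  norm_num at h ⊢
  linarith

lemma integral_two_thirds_two_add_div_three (hcont : ContinuousOn f (Icc 0 1))
    (hw3 : ∀ x ∈ Icc (0:ℝ) 1, f ((2 + x) / 3) = 1/3 + (2/3) * f x)
    {b : ℝ} (hb : b ∈ Icc (0:ℝ) 1) :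
    ∫ t in (2/3:ℝ)..(2 + b) / 3, f t = b / 9 + 2/9 * ∫ t in (0:ℝ)..b, f t := by
  have h := integral_comp_div_add f (a := 0) (b := b) (three_ne_zero (α := ℝ)) (2/3)
  have hI := intervalIntegrable_of_mem_Icc_zero_one hcont unitInterval.zero_mem hb
  rw [integral_congr fun x hx => (congrArg f (by ring)).trans
      (hw3 x (uIcc_subset_Icc unitInterval.zero_mem hb hx)),
    integral_add intervalIntegrable_const (hI.const_mul _), integral_const_mul,
    smul_eq_mul] at h
  rw [show (2 + b) / 3 = b / 3 + 2/3 by ring]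
  norm_num at h ⊢
  linarith

lemma integral_zero_two_thirds_add (hcont : ContinuousOn f (Icc 0 1)) {b : ℝ}
    (hb : b ∈ Icc (0:ℝ) 1) :
    ∫ t in (0:ℝ)..b, f t = (∫ t in (0:ℝ)..1/3, f t) + (∫ t in (1/3:ℝ)..2/3, f t)
      + ∫ t in (2/3:ℝ)..b, f t := by
  have hI {a b : ℝ} := @intervalIntegrable_of_mem_Icc_zero_one f hcont a b
  have h13 : (1/3:ℝ) ∈ Icc (0:ℝ) 1 := by norm_num
  have h23 : (2/3:ℝ) ∈ Icc (0:ℝ) 1 := by norm_num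
  rw [integral_add_adjacent_intervals (hI unitInterval.zero_mem h13) (hI h13 h23),
    integral_add_adjacent_intervals (hI unitInterval.zero_mem h23) (hI h23 hb)]

lemma integral_zero_one (hcont : ContinuousOn f (Icc 0 1))
    (hw1 : ∀ x ∈ Icc (0:ℝ) 1, f (x / 3) = (2/3) * f x)
    (hw2 : ∀ x ∈ Icc (0:ℝ) 1, f ((2 - x) / 3) = (1/3) * (1 + f x))
    (hw3 : ∀ x ∈ Icc (0:ℝ) 1, f ((2 + x) / 3) = 1/3 + (2/3) * f x) :
    ∫ t in (0:ℝ)..1, f t = 1/2 := by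
  have hsplit := integral_zero_two_thirds_add hcont unitInterval.one_mem
  have hright := integral_two_thirds_two_add_div_three hcont hw3 unitInterval.one_mem
  rw [integral_zero_div_three hw1 unitInterval.one_mem, integral_one_third_two_thirds hcont hw2] at hsplit
  norm_num at hright
  linarith

lemma integral_zero_two_add_div_three (hcont : ContinuousOn f (Icc 0 1))
    (hw1 : ∀ x ∈ Icc (0:ℝ) 1, f (x / 3) = (2/3) * f x)
    (hw2 : ∀ x ∈ Icc (0:ℝ) 1, f ((2 - x) / 3) = (1/3) * (1 + f x))
    (hw3 : ∀ x ∈ Icc (0:ℝ) 1, f ((2 + x) / 3) = 1/3 + (2/3) * f x)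
    {b : ℝ} (hb : b ∈ Icc (0:ℝ) 1) :
    ∫ t in (0:ℝ)..(2 + b) / 3, f t = 5/18 + b / 9 + 2/9 * ∫ t in (0:ℝ)..b, f t := by
  have hb' : (2 + b) / 3 ∈ Icc (0:ℝ) 1 := ⟨by linarith [hb.1], by linarith [hb.2]⟩
  rw [integral_zero_two_thirds_add hcont hb', integral_zero_div_three hw1 unitInterval.one_mem,
    integral_one_third_two_thirds hcont hw2, integral_two_thirds_two_add_div_three hcont hw3 hb,
    integral_zero_one hcont hw1 hw2 hw3]
  ring

lemma integral_zero_of_three_pow_mul_eq (hcont : ContinuousOn f (Icc 0 1))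
    (hw1 : ∀ x ∈ Icc (0:ℝ) 1, f (x / 3) = (2/3) * f x)
    (hw2 : ∀ x ∈ Icc (0:ℝ) 1, f ((2 - x) / 3) = (1/3) * (1 + f x))
    (hw3 : ∀ x ∈ Icc (0:ℝ) 1, f ((2 + x) / 3) = 1/3 + (2/3) * f x)
    (n : ℕ) {c : ℝ} (hc : c ∈ Icc (0:ℝ) 1) (hfix : 3 ^ (n + 1) * c = 2 + c) :
    (∫ t in (0:ℝ)..c, f t) * (1 - (2/9) ^ (n + 1)) = (2/9) ^ n * (5/18 + c / 9) := by
  have hc' : (2 + c) / 3 ∈ Icc (0:ℝ) 1 := ⟨by linarith [hc.1], by linarith [hc.2]⟩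
  have hc_eq : c = (2 + c) / 3 / 3 ^ n := by
    rw [eq_div_iff (by positivity), ← hfix]
    ring
  have key := integral_zero_div_three_pow hw1 n hc'
  rw [← hc_eq, integral_zero_two_add_div_three hcont hw1 hw2 hw3 hc] at key
  rw [pow_succ]
  linear_combination key

theorem bourbaki_stmt_general (f : ℝ → ℝ)
    (hcont : ContinuousOn f (Set.Icc 0 1))
    (hw1 : ∀ x ∈ Set.Icc (0:ℝ) 1, f (x / 3) = (2/3) * f x)
    (hw2 : ∀ x ∈ Set.Icc (0:ℝ) 1, f ((2 - x) / 3) = (1/3) * (1 + f x))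
    (hw3 : ∀ x ∈ Set.Icc (0:ℝ) 1, f ((2 + x) / 3) = 1/3 + (2/3) * f x) :
    ∀ i : ℕ, 0 < i → ∫ t in (0:ℝ)..(2 / (3 ^ i - 1)), f t = (2 ^ (i - 1) / 9 ^ i) * ((5 * 3 ^ i - 1) / (2 * 3 ^ i - 2)) * (1 / (1 - (2/9) ^ i)) := by
  intro i hi
  obtain ⟨n, rfl⟩ := Nat.exists_eq_add_of_lt hi
  rw [zero_add, Nat.add_sub_cancel]
  have h3 : (3:ℝ) ≤ 3 ^ (n + 1) := le_self_pow₀ (by norm_num) (Nat.succ_ne_zero n)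
  have hlt : ((2:ℝ) / 9) ^ (n + 1) < 1 := pow_lt_one₀ (by norm_num) (by norm_num) n.succ_ne_zero
  have hc : 2 / (3 ^ (n + 1) - 1) ∈ Icc (0:ℝ) 1 :=
    ⟨div_nonneg zero_le_two (by linarith), (div_le_one (by linarith)).2 (by linarith)⟩
  have hfix : (3:ℝ) ^ (n + 1) * (2 / (3 ^ (n + 1) - 1)) = 2 + 2 / (3 ^ (n + 1) - 1) := by
    field_simp [show (3:ℝ) ^ (n + 1) - 1 ≠ 0 by linarith]
    ring
  have key := integral_zero_of_three_pow_mul_eq hcont hw1 hw2 hw3 n hc hfix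
  rw [← eq_div_iff (by linarith)] at key
  rw [key, div_eq_mul_one_div _ (1 - _)]
  congr 1
  rw [div_pow]
  field_simp [show (3:ℝ) ^ (n + 1) - 1 ≠ 0 by linarith]
  ring

theorem bourbaki_stmt (f : ℝ → ℝ)
    (hcont : ContinuousOn f (Set.Icc 0 1))
    (h0 : f 0 = 0) (h1 : f 1 = 1)
    (hw1 : ∀ x ∈ Set.Icc (0:ℝ) 1, f (x / 3) = (2/3) * f x)
    (hw2 : ∀ x ∈ Set.Icc (0:ℝ) 1, f ((2 - x) / 3) = (1/3) * (1 + f x))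
    (hw3 : ∀ x ∈ Set.Icc (0:ℝ) 1, f ((2 + x) / 3) = 1/3 + (2/3) * f x) :
    ∀ i : ℕ, 0 < i → ∫ t in (0:ℝ)..(2 / (3 ^ i - 1)), f t = (2 ^ (i - 1) / 9 ^ i) * ((5 * 3 ^ i - 1) / (2 * 3 ^ i - 2)) * (1 / (1 - (2/9) ^ i)) :=
  bourbaki_stmt_general f hcont hw1 hw2 hw3
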